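/- Let k ≥ 2. Consider the (k-1)×(k-1) tridiagonal-plus-column linear system on unknowns (x₀, x₁, ..., x_{k-2}): x₁ + t₀x₀ = 0; x₁ + x₂ + t₁x₀ = 0; x_{j-1} + x_j + x_{j+1} + t_j x₀ = 0 for 2 ≤ j ≤ k-3; and x_{k-3} + 2x_{k-2} + t_{k-2}x₀ = 0, where t₀ = a_{2k,2k-3}+a_{2k,0}-k, t₁ = a_{2k,2k-4}+a_{2k,1}-k, t_j = a_{2k,2k-j-3}+a_{2k,j} otherwise, with a_{m,s} = ((m+2s+3)/(2(m-1)))C(m-1,s+2). Then this homogeneous linear system has only the trivial solution x₀ = x₁ = ... = x_{k-2} = 0. -/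

import Mathlib

/-!
With `χ m = -2` for `3 ∣ m` and `χ m = 1` otherwise, the weights `y j = χ (j + 2k)` kill the band
part of the system: three consecutive weights sum to zero and `y (k-3) + 2 y (k-2) = 0`. So the
weighted sum of the equations is `D * x 0 = 0` with `D = ∑ y j * t j`. Writing
`a_{2k,s} = C(2k-1, s+2)/2 + C(2k-2, s+1)` and using `∑ r, C(n,r) χ(r+b) = (-1)^n χ(n+2b)`
(Pascal's rule), `D` is `-1/2` or `1`. Hence `x 0 = 0`, and forward substitution gives the rest.
For `k = 2, 3` the system is solved by hand.
-/

/-- The coefficient `a_{m,s} = ((m+2s+3)/(2(m-1))) * C(m-1, s+2)` as a rational number. -/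
def acoef (m s : ℕ) : ℚ :=
  ((m : ℚ) + 2 * s + 3) / (2 * ((m : ℚ) - 1)) * (Nat.choose (m - 1) (s + 2))

open Finset

def chi (m : ℕ) : ℚ := if m % 3 = 0 then -2 else 1

lemma chi_congr {m n : ℕ} (h : m % 3 = 0 ↔ n % 3 = 0) : chi m = chi n := by
  simp only [chi, h]

lemma chi_add_chi_add_chi (m : ℕ) : chi m + chi (m + 1) + chi (m + 2) = 0 := by
  simp only [chi]
  split_ifs <;> first | omega | norm_num

lemma sum_choose_mul_chi (n b : ℕ) :
    ∑ r ∈ range (n + 1), (n.choose r : ℚ) * chi (r + b) = (-1) ^ n * chi (n + 2 * b) := by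
  induction n generalizing b with
  | zero => simp [chi_congr (show b % 3 = 0 ↔ (2 * b) % 3 = 0 by omega)]
  | succ n ih =>
    have pascal : ∑ r ∈ range (n + 1 + 1), ((n + 1).choose r : ℚ) * chi (r + b) =
        ∑ r ∈ range (n + 1), (n.choose r : ℚ) * chi (r + b) +
          ∑ r ∈ range (n + 1), (n.choose r : ℚ) * chi (r + (b + 1)) := by
      simpa only [add_assoc, add_comm 1 b] using sum_choose_succ_mul (fun r _ => chi (r + b)) n
    rw [pascal, ih, ih, add_right_comm n 1,
      chi_congr (show (n + 2 * (b + 1)) % 3 = 0 ↔ (n + 2 * b + 2) % 3 = 0 by omega)]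
    linear_combination (-1) ^ n * chi_add_chi_add_chi (n + 2 * b)

lemma acoef_add_two (n s : ℕ) :
    acoef (n + 2) s = (n + 1).choose (s + 2) / 2 + n.choose (s + 1) := by
  have pascal : ((n + 1 : ℕ) : ℚ) * n.choose (s + 1) = (n + 1).choose (s + 2) * (s + 2 : ℕ) := by
    exact_mod_cast Nat.add_one_mul_choose_eq n (s + 1)
  have hcast : ((n + 2 : ℕ) : ℚ) - 1 = n + 1 := by push_cast; ring
  rw [acoef, hcast, show n + 2 - 1 = n + 1 from rfl]
  push_cast at pascal ⊢
  field_simp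
  linear_combination (-2) * pascal

lemma sum_range_two_mul {M : Type*} [AddCommMonoid M] (f : ℕ → M) (n : ℕ) :
    ∑ s ∈ range (2 * n), f s = ∑ j ∈ range n, (f j + f (2 * n - 1 - j)) := by
  rw [two_mul, sum_range_add, sum_add_distrib, ← sum_range_reflect (fun j => f (n + j)) n]
  congr 1
  refine sum_congr rfl fun j hj => ?_
  rw [mem_range] at hj
  congr 1
  omega

lemma sum_chi_mul_acoef (n b : ℕ) :
    ∑ s ∈ range n, chi (s + 2 + b) * acoef (n + 2) s =
      ((-1) ^ (n + 1) * chi (n + 1 + 2 * b) - chi b - (n + 1) * chi (b + 1)) / 2 +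
        ((-1) ^ n * chi (n + 2 * (b + 1)) - chi (b + 1)) := by
  have upper : ∑ s ∈ range n, ((n + 1).choose (s + 2) : ℚ) * chi (s + 2 + b) =
      (-1) ^ (n + 1) * chi (n + 1 + 2 * b) - chi b - (n + 1) * chi (b + 1) := by
    have full := sum_choose_mul_chi (n + 1) b
    rw [sum_range_succ', sum_range_succ'] at full
    simp only [zero_add, Nat.choose_zero_right, Nat.choose_one_right,
      show ∀ s, s + 1 + 1 = s + 2 from fun _ => rfl, add_comm 1 b] at full
    push_cast at full
    linear_combination full
  have lower : ∑ s ∈ range n, (n.choose (s + 1) : ℚ) * chi (s + 2 + b) =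
      (-1) ^ n * chi (n + 2 * (b + 1)) - chi (b + 1) := by
    have full := sum_choose_mul_chi n (b + 1)
    rw [sum_range_succ'] at full
    simp only [zero_add, Nat.choose_zero_right,
      show ∀ s, s + 1 + (b + 1) = s + 2 + b from fun _ => by omega] at full
    push_cast at full
    linear_combination full
  calc ∑ s ∈ range n, chi (s + 2 + b) * acoef (n + 2) s
      = ∑ s ∈ range n, (((n + 1).choose (s + 2) : ℚ) * chi (s + 2 + b) / 2 +
          (n.choose (s + 1) : ℚ) * chi (s + 2 + b)) :=
        sum_congr rfl fun s _ => by rw [acoef_add_two]; ring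
    _ = _ := by rw [sum_add_distrib, ← sum_div, upper, lower]

lemma sum_chi_mul_coeff (k : ℕ) (hk : 3 ≤ k) :
    ∑ j ∈ range (k - 1), chi (j + 2 * k) *
        (acoef (2 * k) (2 * k - j - 3) + acoef (2 * k) j - if j ≤ 1 then (k : ℚ) else 0) =
      if k % 3 = 0 then -1 / 2 else 1 := by
  obtain ⟨m, rfl⟩ : ∃ m, k = m + 3 := ⟨k - 3, by omega⟩
  -- `χ (j + 2k)` is invariant under `j ↦ 2k - 3 - j`, so the two `acoef` terms of `t j` fold into
  -- a single sum over `s < 2k - 2`.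
  have folded : ∑ j ∈ range (m + 2), chi (j + 2 * (m + 3)) *
      (acoef (2 * (m + 3)) (2 * (m + 3) - j - 3) + acoef (2 * (m + 3)) j) =
      ∑ s ∈ range (2 * m + 4), chi (s + 2 + (2 * m + 4)) * acoef (2 * m + 4 + 2) s := by
    rw [show 2 * m + 4 = 2 * (m + 2) by ring, sum_range_two_mul]
    refine sum_congr rfl fun j hj => ?_
    rw [mem_range] at hj
    rw [show 2 * (m + 2) - 1 - j = 2 * (m + 3) - j - 3 by omega,
      chi_congr (show (2 * (m + 3) - j - 3 + 2 + 2 * (m + 2)) % 3 = 0 ↔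
        (j + 2 * (m + 3)) % 3 = 0 by omega),
      show j + 2 + 2 * (m + 2) = j + 2 * (m + 3) by ring,
      show 2 * (m + 2) + 2 = 2 * (m + 3) by ring]
    ring
  have boundary : ∑ j ∈ range (m + 2), chi (j + 2 * (m + 3)) *
      (if j ≤ 1 then ((m + 3 : ℕ) : ℚ) else 0) =
      (chi (2 * (m + 3)) + chi (1 + 2 * (m + 3))) * (m + 3) := by
    rw [sum_range_succ', sum_range_succ', sum_eq_zero fun j _ => by simp]
    norm_num
    ring
  rw [show m + 3 - 1 = m + 2 by omega]
  simp only [mul_sub, sum_sub_distrib]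
  rw [folded, boundary, sum_chi_mul_acoef,
    Odd.neg_one_pow ⟨m + 2, by ring⟩, Even.neg_one_pow ⟨m + 2, by ring⟩]
  obtain ⟨q, r, hr, rfl⟩ : ∃ q r, r < 3 ∧ m = 3 * q + r :=
    ⟨m / 3, m % 3, m.mod_lt (by norm_num), (m.div_add_mod 3).symm⟩
  push_cast
  simp only [chi]
  interval_cases r <;> split_ifs <;> first | (exfalso; omega) | ring

section BandSystem

variable {R : Type*} [CommRing R] {k : ℕ} {x t y : ℕ → R}

lemma weighted_partial_row_sum (hy : ∀ i, y i + y (i + 1) + y (i + 2) = 0)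
    (h0 : x 1 + t 0 * x 0 = 0) (h1 : x 1 + x 2 + t 1 * x 0 = 0)
    (hj : ∀ j, 2 ≤ j → j ≤ k - 3 → x (j - 1) + x j + x (j + 1) + t j * x 0 = 0) :
    ∀ i, i + 4 ≤ k →
      (∑ j ∈ range (i + 2), y j * t j) * x 0 + y (i + 1) * x (i + 2) - y (i + 2) * x (i + 1) = 0
  | 0, _ => by
    rw [sum_range_succ, sum_range_one]
    linear_combination y 0 * h0 + y 1 * h1 - x 1 * hy 0
  | i + 1, hi => by
    have row := hj (i + 2) (by omega) (by omega)
    rw [show i + 2 - 1 = i + 1 by omega] at row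
    rw [sum_range_succ]
    linear_combination weighted_partial_row_sum hy h0 h1 hj i (by omega) + y (i + 2) * row -
      x (i + 2) * hy (i + 1)

lemma weighted_row_sum (hk : 4 ≤ k) (hy : ∀ i, y i + y (i + 1) + y (i + 2) = 0)
    (hy_end : y (k - 3) + 2 * y (k - 2) = 0)
    (h0 : x 1 + t 0 * x 0 = 0) (h1 : x 1 + x 2 + t 1 * x 0 = 0)
    (hj : ∀ j, 2 ≤ j → j ≤ k - 3 → x (j - 1) + x j + x (j + 1) + t j * x 0 = 0)
    (hlast : x (k - 3) + 2 * x (k - 2) + t (k - 2) * x 0 = 0) :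
    (∑ j ∈ range (k - 1), y j * t j) * x 0 = 0 := by
  have partial_sum := weighted_partial_row_sum hy h0 h1 hj (k - 4) (by omega)
  rw [show k - 4 + 2 = k - 2 by omega, show k - 4 + 1 = k - 3 by omega] at partial_sum
  rw [show k - 1 = k - 2 + 1 by omega, sum_range_succ]
  linear_combination partial_sum + y (k - 2) * hlast - x (k - 2) * hy_end

lemma eq_zero_of_apply_zero_eq_zero (h0 : x 1 + t 0 * x 0 = 0) (h1 : x 1 + x 2 + t 1 * x 0 = 0)
    (hj : ∀ j, 2 ≤ j → j ≤ k - 3 → x (j - 1) + x j + x (j + 1) + t j * x 0 = 0)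
    (hx0 : x 0 = 0) : ∀ j ≤ k - 2, x j = 0
  | 0, _ => hx0
  | 1, _ => by linear_combination h0 - t 0 * hx0
  | 2, _ => by linear_combination h1 - h0 - (t 1 - t 0) * hx0
  | j + 3, hj3 => by
    have row := hj (j + 2) (by omega) (by omega)
    rw [show j + 2 - 1 = j + 1 by omega] at row
    linear_combination row - eq_zero_of_apply_zero_eq_zero h0 h1 hj hx0 (j + 1) (by omega) -
      eq_zero_of_apply_zero_eq_zero h0 h1 hj hx0 (j + 2) (by omega) - t (j + 2) * hx0

end BandSystem

/-- The homogeneous linear system with the `t_j`-column and tridiagonal band coming from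
the recursion for even order Jacobi fields has only the trivial solution. -/
theorem linear_system_trivial_solution (k : ℕ) (hk : 2 ≤ k) (x : ℕ → ℚ)
    (t : ℕ → ℚ)
    (ht : ∀ j, t j =
      acoef (2 * k) (2 * k - j - 3) + acoef (2 * k) j - (if j ≤ 1 then (k : ℚ) else 0))
    (h0 : x 1 + t 0 * x 0 = 0)
    (h1 : x 1 + x 2 + t 1 * x 0 = 0)
    (hj : ∀ j, 2 ≤ j → j ≤ k - 3 → x (j - 1) + x j + x (j + 1) + t j * x 0 = 0)
    (hlast : x (k - 3) + 2 * x (k - 2) + t (k - 2) * x 0 = 0) :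
    ∀ j ≤ k - 2, x j = 0 := by
  refine eq_zero_of_apply_zero_eq_zero h0 h1 hj ?_
  obtain rfl | rfl | hk4 : k = 2 ∨ k = 3 ∨ 4 ≤ k := by omega
  · have t0 : t 0 = 3 := by norm_num [ht, acoef, Nat.choose]
    norm_num only [t0] at hlast
    linear_combination hlast / 6
  · have t0 : t 0 = 15 / 2 := by norm_num [ht, acoef, Nat.choose]
    have t1 : t 1 = 29 / 2 := by norm_num [ht, acoef, Nat.choose]
    norm_num only [t1] at hlast
    rw [t0] at h0
    linear_combination 2 * hlast - 4 * h0
  · have hy_end : chi (k - 3 + 2 * k) + 2 * chi (k - 2 + 2 * k) = 0 := by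
      simp only [chi]
      split_ifs <;> first | (exfalso; omega) | norm_num
    have weighted := weighted_row_sum (y := fun i => chi (i + 2 * k)) hk4
      (fun i => by simpa only [add_right_comm i _ (2 * k)] using chi_add_chi_add_chi (i + 2 * k))
      hy_end h0 h1 hj hlast
    simp only [ht, sum_chi_mul_coeff k (by omega)] at weighted
    refine (mul_eq_zero.mp weighted).resolve_left ?_
    split_ifs <;> norm_num
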